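/- Let V be a finite node set, w : V × V → ℝ with w(u,v) ≥ 0 for all u,v and Σ_{u ∈ V} w(u,v) ≤ 1 for every v, let v ∈ V, and let r ∈ [0,1]. Form the transformed instance on V' = V ∪ {⋆} with a new node ⋆ ∉ V, and weights w' : V' × V' → ℝ defined by: w'(u, v'') = w(u, v'') for u, v'' ∈ V; w'(v, ⋆) = r; and w'(u, ⋆) = 0 for u ≠ v and w'(⋆, v'') = 0 for all v''. Then for every seed set S ⊆ V, the live-edge DLT influence satisfies F^{w'}_{⋆}(S) = r · F^{w}_{v}(S). -/

import Mathlib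

open Classical

/-- `q^w_v(u) = w(u,v)` for `u ∈ V`, and `q^w_v(⊥) = 1 − Σ_u w(u,v)`. -/
noncomputable def dltQ {V : Type*} [Fintype V] (w : V → V → ℝ) (v : V) : Option V → ℝ
  | some u => w u v
  | none => 1 - ∑ u, w u v

/-- The probability `p^w(X) = Π_v q^w_v(X(v))` of an assignment `X : V → V ∪ {⊥}`. -/
noncomputable def dltProb {V : Type*} [Fintype V] (w : V → V → ℝ) (X : V → Option V) : ℝ :=
  ∏ v, dltQ w v (X v)

/-- `u₀` is `X`-reachable from `S`: there are `v₀ ∈ S, v₁, …, v_k = u₀` with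
`X(v_i) = v_{i−1}` for `1 ≤ i ≤ k`. -/
def dltReach {V : Type*} (X : V → Option V) (S : Finset V) (u₀ : V) : Prop :=
  ∃ s ∈ S, Relation.ReflTransGen (fun a b => X b = some a) s u₀

open Classical in
/-- The live-edge DLT influence `F^w_{u₀}(S)`. -/
noncomputable def dltInf {V : Type*} [Fintype V] [DecidableEq V] (w : V → V → ℝ)
    (S : Finset V) (u₀ : V) : ℝ :=
  ∑ X : V → Option V, dltProb w X * (if dltReach X S u₀ then 1 else 0)

/-!
Every assignment `X'` of the transformed graph in which `⋆` is reached and which has positive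
probability must let `⋆` choose the edge from `v` and every `u ∈ V` choose a parent in `V`, so it
is the lift of an assignment `X` of `V`, with `p^{w'}(X') = r · p^w(X)`. Along a lift, `⋆` is
reachable from `S` exactly when `v` is reachable from `S` under `X`.
-/

lemma dltReach.exists_parent_of_notMem {V : Type*} {X : V → Option V} {S : Finset V} {u : V}
    (h : dltReach X S u) (hu : u ∉ S) : ∃ a, X u = some a := by
  obtain ⟨s, hs, hpath⟩ := h
  rcases hpath.cases_tail with rfl | ⟨a, -, ha⟩
  · exact absurd hs hu
  · exact ⟨a, ha⟩

namespace Pendant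

variable {V : Type*}

def lift (v : V) (X : V → Option V) : Option V → Option (Option V)
  | none => some (some v)
  | some u => (X u).map some

@[simp] lemma lift_none (v : V) (X : V → Option V) : lift v X none = some (some v) := rfl

@[simp] lemma lift_some (v : V) (X : V → Option V) (u : V) :
    lift v X (some u) = (X u).map some := rfl

lemma lift_injective (v : V) : Function.Injective (lift v) := fun _ _ h =>
  funext fun u => Option.map_injective (Option.some_injective V) (congrFun h (some u))

lemma reflTransGen_lift_some_iff {v x y : V} {X : V → Option V} :
    Relation.ReflTransGen (fun a b => lift v X b = some a) (some x) (some y) ↔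
      Relation.ReflTransGen (fun a b => X b = some a) x y := by
  refine ⟨fun h => ?_, fun h => h.lift some fun a b hab => by simp [Function.onFun, hab]⟩
  generalize hc : some y = c at h
  induction h generalizing y with
  | refl => cases hc; exact .refl
  | tail _ hstep ih =>
    subst hc
    obtain ⟨a, hXa, rfl⟩ := Option.map_eq_some_iff.mp hstep
    exact (ih rfl).tail hXa

lemma dltReach_lift_none_iff [DecidableEq V] {v : V} {X : V → Option V} {S : Finset V} :
    dltReach (lift v X) (S.image some) none ↔ dltReach X S v := by
  constructor
  · rintro ⟨_, hs', hpath⟩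
    obtain ⟨s, hs, rfl⟩ := Finset.mem_image.mp hs'
    rcases hpath.cases_tail with h | ⟨_, hpath, hstep⟩
    · cases h
    · cases Option.some_injective _ hstep
      exact ⟨s, hs, reflTransGen_lift_some_iff.mp hpath⟩
  · rintro ⟨s, hs, hpath⟩
    exact ⟨some s, Finset.mem_image_of_mem some hs,
      (reflTransGen_lift_some_iff.mpr hpath).tail rfl⟩

variable [Fintype V] {w : V → V → ℝ} {w' : Option V → Option V → ℝ} {v : V} {r : ℝ}

lemma dltProb_lift (hVV : ∀ u v'' : V, w' (some u) (some v'') = w u v'')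
    (hvstar : w' (some v) none = r) (hstar : ∀ z : Option V, w' none z = 0)
    (X : V → Option V) : dltProb w' (lift v X) = r * dltProb w X := by
  have hfactor (u : V) : dltQ w' (some u) (lift v X (some u)) = dltQ w u (X u) := by
    rcases hX : X u with _ | a <;> simp [hX, dltQ, Fintype.sum_option, hstar, hVV]
  simp only [dltProb, Fintype.prod_option, hfactor]
  simp [dltQ, hvstar]

lemma mem_range_lift_of_dltProb_ne_zero (hother : ∀ u : V, u ≠ v → w' (some u) none = 0)
    (hstar : ∀ z : Option V, w' none z = 0) {X' : Option V → Option (Option V)}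
    (hprob : dltProb w' X' ≠ 0) (hnone : X' none ≠ none) : X' ∈ Set.range (lift v) := by
  have hfactor (z : Option V) : dltQ w' z (X' z) ≠ 0 := fun h =>
    hprob (Finset.prod_eq_zero (Finset.mem_univ z) h)
  have hpendant : X' none = some (some v) := by
    rcases hX : X' none with _ | _ | u
    · exact absurd hX hnone
    · simpa [hX, dltQ, hstar] using hfactor none
    · by_contra huv
      simpa [hX, dltQ, hother u (by simpa using huv)] using hfactor none
  have hparent (u : V) : X' (some u) ≠ some none := fun hX => by
    simpa [hX, dltQ, hstar] using hfactor (some u)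
  refine ⟨fun u => (X' (some u)).join, funext fun z => ?_⟩
  rcases z with _ | u
  · exact hpendant.symm
  · rcases hX : X' (some u) with _ | _ | a
    · simp [hX]
    · exact absurd hX (hparent u)
    · simp [hX]

end Pendant

/-- `⋆` is modeled as `none : Option V` and each original node `u` as `some u`. -/
theorem dlt_influence_pendant_transform_general {V : Type*} [Fintype V] [DecidableEq V]
    (w : V → V → ℝ)
    (v : V) (r : ℝ)
    (w' : Option V → Option V → ℝ)
    (hVV : ∀ u v'' : V, w' (some u) (some v'') = w u v'')
    (hvstar : w' (some v) none = r)
    (hother : ∀ u : V, u ≠ v → w' (some u) none = 0)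
    (hstar : ∀ z : Option V, w' none z = 0)
    (S : Finset V) :
    dltInf w' (S.image some) (none : Option V) = r * dltInf w S v := by
  rw [dltInf, dltInf, Finset.mul_sum]
  refine (Fintype.sum_of_injective (Pendant.lift v) (Pendant.lift_injective v) _ _
    (fun X' hX' => ?_) (fun X => ?_)).symm
  · by_cases hreach : dltReach X' (S.image some) none
    · have hnone : X' none ≠ none := by
        obtain ⟨a, ha⟩ := hreach.exists_parent_of_notMem (by simp)
        simp [ha]
      have hprob : dltProb w' X' = 0 := by
        by_contra hprob
        exact hX' (Pendant.mem_range_lift_of_dltProb_ne_zero hother hstar hprob hnone)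
      simp [hprob]
    · simp [hreach]
  · rw [Pendant.dltProb_lift hVV hvstar hstar, if_congr Pendant.dltReach_lift_none_iff rfl rfl,
      mul_assoc]

/-- Adding a pendant node `⋆` attached to `v` by an edge of weight `r` scales the
live-edge DLT influence: `F^{w'}_{⋆}(S) = r · F^{w}_{v}(S)`.  Here `⋆` is modeled
as `none : Option V` and each original node `u` as `some u`. -/
theorem dlt_influence_pendant_transform {V : Type*} [Fintype V] [DecidableEq V]
    (w : V → V → ℝ) (hw0 : ∀ u v, 0 ≤ w u v) (hw1 : ∀ v, ∑ u, w u v ≤ 1)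
    (v : V) (r : ℝ) (hr : r ∈ Set.Icc (0 : ℝ) 1)
    (w' : Option V → Option V → ℝ)
    (hVV : ∀ u v'' : V, w' (some u) (some v'') = w u v'')
    (hvstar : w' (some v) none = r)
    (hother : ∀ u : V, u ≠ v → w' (some u) none = 0)
    (hstar : ∀ z : Option V, w' none z = 0)
    (S : Finset V) :
    dltInf w' (S.image some) (none : Option V) = r * dltInf w S v :=
  dlt_influence_pendant_transform_general w v r w' hVV hvstar hother hstar S
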